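/- arXiv:2011.02648 — 2 statements merged into one kernel-verified Lean document; each statement's English description precedes it below -/
import Mathlib

section
/- Let Θ = (θ_1,…,θ_N) ∈ ℝ^{Nm} with θ_k ∈ ℝ^m, let λ_0,…,λ_N ∈ ℝ^n be defined by λ_N = 0 and λ_{k−1} = Aᵀλ_k + Cᵀθ_k for k = 1,…,N, and let x̂_0,…,x̂_N be defined by x̂_0 = x̄_0 + P⁻¹Aᵀλ_0 and x̂_{k+1} = A x̂_k + B Q⁻¹Bᵀλ_k for k = 0,…,N−1. Then Θᵀ · stack(C x̂_1,…,C x̂_N) = Θᵀ F Q_inv Fᵀ Θ + Θᵀ O P⁻¹ Oᵀ Θ + Θᵀ O x̄_0, where stack(C x̂_1,…,C x̂_N) ∈ ℝ^{Nm} is the vertical stack of the vectors C x̂_k. -/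
open Matrix

/-- State trajectory generated by `x_{k+1} = A x_k + B w_k` from initial state `x0`. -/
def traj {n l : ℕ} (A : Matrix (Fin n) (Fin n) ℝ) (B : Matrix (Fin n) (Fin l) ℝ)
    (x0 : Fin n → ℝ) (w : ℕ → Fin l → ℝ) : ℕ → Fin n → ℝ
  | 0 => x0
  | k + 1 => A *ᵥ traj A B x0 w k + B *ᵥ w k

/-- The block lower-triangular matrix `F` whose `(k, i)` block is `C A^{k−1−i} B`. -/
def Fmat {n l m : ℕ} (N : ℕ) (A : Matrix (Fin n) (Fin n) ℝ) (B : Matrix (Fin n) (Fin l) ℝ)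
    (C : Matrix (Fin m) (Fin n) ℝ) : Matrix (Fin N × Fin m) (Fin N × Fin l) ℝ :=
  fun p q => if (q.1 : ℕ) ≤ (p.1 : ℕ) then (C * A ^ ((p.1 : ℕ) - (q.1 : ℕ)) * B) p.2 q.2 else 0

/-- Block-diagonal matrix with `N` diagonal blocks `Q⁻¹`. -/
noncomputable def Qinv {l : ℕ} (N : ℕ) (Q : Matrix (Fin l) (Fin l) ℝ) :
    Matrix (Fin N × Fin l) (Fin N × Fin l) ℝ :=
  fun p q => if p.1 = q.1 then Q⁻¹ p.2 q.2 else 0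

/-- The vertical stack `O` of `C A, C A², …, C A^N`. -/
def Omat {n m : ℕ} (N : ℕ) (A : Matrix (Fin n) (Fin n) ℝ) (C : Matrix (Fin m) (Fin n) ℝ) :
    Matrix (Fin N × Fin m) (Fin n) ℝ :=
  fun p c => (C * A ^ ((p.1 : ℕ) + 1)) p.2 c

/-! The costate `λ` is the adjoint of the input–output map. For every trajectory
`z (k+1) = A z k + B w k`, summation by parts against the backward recursion of `λ` gives
`∑ θ_k ⬝ C z (k+1) = λ 0 ⬝ A z 0 + ∑ λ k ⬝ B w k`, while the stacked outputs are `O z 0 + F w`.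
Comparing the two identifies `Oᵀ Θ = Aᵀ λ 0` and `Fᵀ Θ = (Bᵀ λ k)_k`. Hence `x̂` is the trajectory
started at `x̄₀ + P⁻¹ Oᵀ Θ` with input `Q_inv Fᵀ Θ`, and its stacked outputs are
`O x̄₀ + O P⁻¹ Oᵀ Θ + F Q_inv Fᵀ Θ`. -/

open Finset Function

section Trajectory

variable {R : Type*} {n p o : Type*} [Fintype n] [Fintype p] [Fintype o]

theorem sum_dotProduct_output_eq_of_costate [CommRing R] {N : ℕ} (A : Matrix n n R)
    (B : Matrix n p R) (C : Matrix o n R) (θ : Fin N → o → R) (lam z : ℕ → n → R) (w : ℕ → p → R)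
    (hlamN : lam N = 0) (hlam : ∀ k : Fin N, lam k = Aᵀ *ᵥ lam (k + 1) + Cᵀ *ᵥ θ k)
    (hz : ∀ k < N, z (k + 1) = A *ᵥ z k + B *ᵥ w k) :
    ∑ k : Fin N, θ k ⬝ᵥ C *ᵥ z (k + 1)
      = lam 0 ⬝ᵥ A *ᵥ z 0 + ∑ k : Fin N, lam k ⬝ᵥ B *ᵥ w k := by
  have step (k : Fin N) : θ k ⬝ᵥ C *ᵥ z (k + 1)
      = (lam k ⬝ᵥ A *ᵥ z k - lam (k + 1) ⬝ᵥ A *ᵥ z (k + 1)) + lam k ⬝ᵥ B *ᵥ w k := by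
    have hθ : Cᵀ *ᵥ θ k = lam k - Aᵀ *ᵥ lam (k + 1) := by rw [hlam k]; abel
    calc θ k ⬝ᵥ C *ᵥ z (k + 1) = (Cᵀ *ᵥ θ k) ⬝ᵥ z (k + 1) := by
          rw [dotProduct_mulVec, mulVec_transpose]
      _ = lam k ⬝ᵥ z (k + 1) - lam (k + 1) ⬝ᵥ A *ᵥ z (k + 1) := by
          rw [hθ, sub_dotProduct, dotProduct_mulVec, mulVec_transpose]
      _ = _ := by rw [hz k k.isLt, dotProduct_add]; ring
  rw [sum_congr rfl fun k _ => step k, sum_add_distrib,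
    Fin.sum_univ_eq_sum_range (fun k => lam k ⬝ᵥ A *ᵥ z k - lam (k + 1) ⬝ᵥ A *ᵥ z (k + 1)),
    sum_range_sub', hlamN, zero_dotProduct, sub_zero]

theorem trajectory_eq_pow_mulVec_add_sum [Semiring R] [DecidableEq n] {N : ℕ} (A : Matrix n n R)
    (B : Matrix n p R) (z : ℕ → n → R) (w : ℕ → p → R)
    (hz : ∀ k < N, z (k + 1) = A *ᵥ z k + B *ᵥ w k) {k : ℕ} (hk : k ≤ N) :
    z k = A ^ k *ᵥ z 0 + ∑ i ∈ range k, (A ^ (k - 1 - i) * B) *ᵥ w i := by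
  induction k with
  | zero => simp
  | succ k ih =>
    have hA : ∀ i ∈ range k, A *ᵥ (A ^ (k - 1 - i) * B) *ᵥ w i = (A ^ (k - i) * B) *ᵥ w i := by
      intro i hi
      rw [mulVec_mulVec, ← Matrix.mul_assoc, ← pow_succ', show k - 1 - i + 1 = k - i by
        simp only [mem_range] at hi; omega]
    rw [hz k hk, ih (by omega), mulVec_add, mulVec_sum, sum_congr rfl hA, mulVec_mulVec,
      ← pow_succ', sum_range_succ]
    simp only [add_tsub_cancel_right, tsub_self, pow_zero, Matrix.one_mul, add_assoc]

theorem dotProduct_uncurry [Mul R] [AddCommMonoid R] {ι : Type*} [Fintype ι] (u : ι × o → R)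
    (y : ι → o → R) :
    u ⬝ᵥ uncurry y = ∑ k, curry u k ⬝ᵥ y k := by
  simp only [dotProduct, Fintype.sum_prod_type, uncurry_apply_pair, curry_apply]

end Trajectory

section BlockMatrices

variable {n l m N : ℕ} (A : Matrix (Fin n) (Fin n) ℝ) (B : Matrix (Fin n) (Fin l) ℝ)
  (C : Matrix (Fin m) (Fin n) ℝ)

theorem Omat_mulVec (x : Fin n → ℝ) :
    Omat N A C *ᵥ x = uncurry fun k : Fin N => C *ᵥ A ^ ((k : ℕ) + 1) *ᵥ x := by
  ext ⟨k, r⟩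
  rw [uncurry_apply_pair, mulVec_mulVec]
  rfl

theorem Fmat_mulVec (w : ℕ → Fin l → ℝ) :
    Fmat N A B C *ᵥ (uncurry fun k : Fin N => w k)
      = uncurry fun k : Fin N =>
          C *ᵥ ∑ i ∈ range ((k : ℕ) + 1), (A ^ ((k : ℕ) - i) * B) *ᵥ w i := by
  ext ⟨k, r⟩
  have hrow : ∀ i : Fin N, (∑ s, Fmat N A B C (k, r) (i, s) * w i s)
      = if (i : ℕ) ≤ k then ((C * A ^ ((k : ℕ) - i) * B) *ᵥ w i) r else 0 := by
    intro i
    unfold Fmat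
    split_ifs <;> simp [mulVec, dotProduct]
  have hrange : (range N).filter (· ≤ (k : ℕ)) = range ((k : ℕ) + 1) := by
    ext i; simp only [mem_filter, mem_range]; omega
  simp only [uncurry_apply_pair, mulVec_sum, mulVec_mulVec, ← Matrix.mul_assoc]
  rw [mulVec, dotProduct, Fintype.sum_prod_type]
  simp only [uncurry_apply_pair, hrow]
  rw [Fin.sum_univ_eq_sum_range
      (fun i => if i ≤ (k : ℕ) then ((C * A ^ ((k : ℕ) - i) * B) *ᵥ w i) r else 0),
    ← sum_filter, hrange, Finset.sum_apply]

theorem Omat_mulVec_add_Fmat_mulVec (z : ℕ → Fin n → ℝ) (w : ℕ → Fin l → ℝ)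
    (hz : ∀ k < N, z (k + 1) = A *ᵥ z k + B *ᵥ w k) :
    Omat N A C *ᵥ z 0 + Fmat N A B C *ᵥ (uncurry fun k : Fin N => w k)
      = uncurry fun k : Fin N => C *ᵥ z (k + 1) := by
  ext ⟨k, r⟩
  rw [Omat_mulVec, Fmat_mulVec, Pi.add_apply, uncurry_apply_pair, uncurry_apply_pair,
    uncurry_apply_pair, ← Pi.add_apply, ← mulVec_add,
    trajectory_eq_pow_mulVec_add_sum A B z w hz k.isLt]
  rfl

theorem Qinv_mulVec (Q : Matrix (Fin l) (Fin l) ℝ) (v : Fin N → Fin l → ℝ) :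
    Qinv N Q *ᵥ uncurry v = uncurry fun k => Q⁻¹ *ᵥ v k := by
  ext ⟨k, s⟩
  rw [mulVec, dotProduct, Fintype.sum_prod_type, sum_eq_single k]
  · simp [Qinv, mulVec, dotProduct]
  · intro j _ hj
    simp [Qinv, Ne.symm hj]
  · simp

end BlockMatrices

section Costate

variable {n l m N : ℕ} (A : Matrix (Fin n) (Fin n) ℝ) (B : Matrix (Fin n) (Fin l) ℝ)
  (C : Matrix (Fin m) (Fin n) ℝ) (Θ : Fin N × Fin m → ℝ) {lam : ℕ → Fin n → ℝ}

theorem dotProduct_Omat_mulVec_add_Fmat_mulVec (hlamN : lam N = 0)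
    (hlam : ∀ k : Fin N, lam k = Aᵀ *ᵥ lam (k + 1) + Cᵀ *ᵥ curry Θ k)
    (x : Fin n → ℝ) (v : Fin N × Fin l → ℝ) :
    Θ ⬝ᵥ (Omat N A C *ᵥ x + Fmat N A B C *ᵥ v)
      = (Aᵀ *ᵥ lam 0) ⬝ᵥ x + (uncurry fun k : Fin N => Bᵀ *ᵥ lam k) ⬝ᵥ v := by
  -- realize `v` as the input sequence of a trajectory starting at `x`
  set w : ℕ → Fin l → ℝ := extend Fin.val (curry v) 0
  have hw : (uncurry fun k : Fin N => w k) = v := by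
    ext ⟨k, s⟩
    simp [w, Fin.val_injective.extend_apply]
  have hout : Omat N A C *ᵥ x + Fmat N A B C *ᵥ (uncurry fun k : Fin N => w k)
      = uncurry fun k : Fin N => C *ᵥ traj A B x w (k + 1) :=
    Omat_mulVec_add_Fmat_mulVec A B C (traj A B x w) w fun _ _ => rfl
  rw [← hw, hout, dotProduct_uncurry, dotProduct_uncurry,
    sum_dotProduct_output_eq_of_costate A B C (curry Θ) lam (traj A B x w) w hlamN hlam
      (fun _ _ => rfl)]
  simp only [traj, dotProduct_mulVec, mulVec_transpose, curry_uncurry]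

theorem Omat_transpose_mulVec (hlamN : lam N = 0)
    (hlam : ∀ k : Fin N, lam k = Aᵀ *ᵥ lam (k + 1) + Cᵀ *ᵥ curry Θ k) :
    (Omat N A C)ᵀ *ᵥ Θ = Aᵀ *ᵥ lam 0 := by
  refine dotProduct_eq _ _ fun x => ?_
  have h := dotProduct_Omat_mulVec_add_Fmat_mulVec A (0 : Matrix (Fin n) (Fin 0) ℝ) C Θ hlamN
    hlam x 0
  rwa [mulVec_zero, add_zero, dotProduct_zero, add_zero, dotProduct_mulVec,
    ← mulVec_transpose] at h

theorem Fmat_transpose_mulVec (hlamN : lam N = 0)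
    (hlam : ∀ k : Fin N, lam k = Aᵀ *ᵥ lam (k + 1) + Cᵀ *ᵥ curry Θ k) :
    (Fmat N A B C)ᵀ *ᵥ Θ = uncurry fun k : Fin N => Bᵀ *ᵥ lam k := by
  refine dotProduct_eq _ _ fun v => ?_
  have h := dotProduct_Omat_mulVec_add_Fmat_mulVec A B C Θ hlamN hlam 0 v
  rwa [mulVec_zero, zero_add, dotProduct_zero, zero_add, dotProduct_mulVec,
    ← mulVec_transpose] at h

end Costate

theorem theta_dot_stacked_Cx_general
    (n l m N : ℕ)
    (A : Matrix (Fin n) (Fin n) ℝ) (B : Matrix (Fin n) (Fin l) ℝ)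
    (C : Matrix (Fin m) (Fin n) ℝ)
    (P : Matrix (Fin n) (Fin n) ℝ) (Q : Matrix (Fin l) (Fin l) ℝ)
    (xbar : Fin n → ℝ)
    (Θ : Fin N × Fin m → ℝ)
    (lam : ℕ → Fin n → ℝ)
    (hlamN : lam N = 0)
    (hlam : ∀ k : Fin N,
      lam (k : ℕ) = Aᵀ *ᵥ lam ((k : ℕ) + 1) + Cᵀ *ᵥ (fun r => Θ (k, r)))
    (xhat : ℕ → Fin n → ℝ)
    (hxhat0 : xhat 0 = xbar + P⁻¹ *ᵥ (Aᵀ *ᵥ lam 0))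
    (hxhat : ∀ k < N, xhat (k + 1) = A *ᵥ xhat k + B *ᵥ (Q⁻¹ *ᵥ (Bᵀ *ᵥ lam k))) :
    Θ ⬝ᵥ (fun q : Fin N × Fin m => (C *ᵥ xhat ((q.1 : ℕ) + 1)) q.2)
      = Θ ⬝ᵥ (Fmat N A B C * Qinv N Q * (Fmat N A B C)ᵀ) *ᵥ Θ
        + Θ ⬝ᵥ (Omat N A C * P⁻¹ * (Omat N A C)ᵀ) *ᵥ Θ
        + Θ ⬝ᵥ (Omat N A C *ᵥ xbar) := by
  have hinput : (uncurry fun k : Fin N => Q⁻¹ *ᵥ (Bᵀ *ᵥ lam k))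
      = Qinv N Q *ᵥ (Fmat N A B C)ᵀ *ᵥ Θ := by
    rw [Fmat_transpose_mulVec A B C Θ hlamN hlam, Qinv_mulVec]
  have houtput := Omat_mulVec_add_Fmat_mulVec A B C xhat _ hxhat
  rw [hinput, hxhat0, ← Omat_transpose_mulVec A C Θ hlamN hlam] at houtput
  change Θ ⬝ᵥ (uncurry fun k : Fin N => C *ᵥ xhat (k + 1)) = _
  simp only [← houtput, ← mulVec_mulVec, mulVec_add, dotProduct_add]
  ring

/-- **Identity (25): `Θᵀ stack(C x̂_1, …, C x̂_N) = ΘᵀFQ_invFᵀΘ + ΘᵀOP⁻¹OᵀΘ + ΘᵀO x̄_0`**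
for the trajectory generated from the costate recursion driven by `Θ`. -/
theorem theta_dot_stacked_Cx
    (n l m N : ℕ) (hN : 1 ≤ N)
    (A : Matrix (Fin n) (Fin n) ℝ) (B : Matrix (Fin n) (Fin l) ℝ)
    (C : Matrix (Fin m) (Fin n) ℝ)
    (P : Matrix (Fin n) (Fin n) ℝ) (Q : Matrix (Fin l) (Fin l) ℝ)
    (hP : IsUnit P.det) (hQ : IsUnit Q.det)
    (xbar : Fin n → ℝ)
    (Θ : Fin N × Fin m → ℝ)
    (lam : ℕ → Fin n → ℝ)
    (hlamN : lam N = 0)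
    (hlam : ∀ k : Fin N,
      lam (k : ℕ) = Aᵀ *ᵥ lam ((k : ℕ) + 1) + Cᵀ *ᵥ (fun r => Θ (k, r)))
    (xhat : ℕ → Fin n → ℝ)
    (hxhat0 : xhat 0 = xbar + P⁻¹ *ᵥ (Aᵀ *ᵥ lam 0))
    (hxhat : ∀ k < N, xhat (k + 1) = A *ᵥ xhat k + B *ᵥ (Q⁻¹ *ᵥ (Bᵀ *ᵥ lam k))) :
    Θ ⬝ᵥ (fun q : Fin N × Fin m => (C *ᵥ xhat ((q.1 : ℕ) + 1)) q.2)
      = Θ ⬝ᵥ (Fmat N A B C * Qinv N Q * (Fmat N A B C)ᵀ) *ᵥ Θ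
        + Θ ⬝ᵥ (Omat N A C * P⁻¹ * (Omat N A C)ᵀ) *ᵥ Θ
        + Θ ⬝ᵥ (Omat N A C *ᵥ xbar) :=
  theta_dot_stacked_Cx_general n l m N A B C P Q xbar Θ lam hlamN hlam xhat hxhat0 hxhat
end

section
/- Let Θ = (θ_1,…,θ_N) ∈ ℝ^{Nm} with θ_k ∈ ℝ^m, let λ_0,…,λ_N ∈ ℝ^n be defined by λ_N = 0 and λ_{k−1} = Aᵀλ_k + Cᵀθ_k for k = 1,…,N, and let x̂_0,…,x̂_N be defined by x̂_0 = P⁻¹Aᵀλ_0 and x̂_{k+1} = A x̂_k + B Q⁻¹Bᵀλ_k for k = 0,…,N−1. Then the vertical stack of x̂_1,…,x̂_N ∈ ℝ^{Nn} equals ( S P⁻¹ Oᵀ + L Q_inv Fᵀ ) Θ, where S ∈ ℝ^{Nn×n} is the vertical stack of A, A², …, A^N, and L ∈ ℝ^{Nn×Nl} is the block lower-triangular matrix whose (k,i) block, for row index k = 1,…,N and column index i = 0,…,N−1, equals A^{k−1−i} B when i ≤ k−1 and 0 otherwise. -/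
open Matrix

/-- The vertical stack `S` of `A, A², …, A^N`. -/
def Smat {n : ℕ} (N : ℕ) (A : Matrix (Fin n) (Fin n) ℝ) :
    Matrix (Fin N × Fin n) (Fin n) ℝ :=
  fun p c => (A ^ ((p.1 : ℕ) + 1)) p.2 c

/-- The block lower-triangular matrix `L` whose `(k, i)` block is `A^{k−1−i} B`. -/
def Lmat {n l : ℕ} (N : ℕ) (A : Matrix (Fin n) (Fin n) ℝ) (B : Matrix (Fin n) (Fin l) ℝ) :
    Matrix (Fin N × Fin n) (Fin N × Fin l) ℝ :=
  fun p q => if (q.1 : ℕ) ≤ (p.1 : ℕ) then (A ^ ((p.1 : ℕ) - (q.1 : ℕ)) * B) p.2 q.2 else 0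

open Finset

/-! Unrolling the costate recursion gives `λ_k = ∑_{j ≥ k} (Aᵀ)^(j-k) Cᵀ θ_j` (blocks of
`Θ` indexed from `0`), so `Oᵀ Θ = Aᵀ λ_0` and the `i`-th block of `Fᵀ Θ` is `Bᵀ λ_i`.
Unrolling the state recursion gives `x̂_(k+1) = A^(k+1) x̂_0 + ∑_{i ≤ k} A^(k-i) B Q⁻¹ Bᵀ λ_i`,
and with `x̂_0 = P⁻¹ Aᵀ λ_0` the two summands are the `k`-th blocks of `S P⁻¹ Oᵀ Θ` and
`L Q_inv Fᵀ Θ`. -/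

section Recursions

variable {R ι : Type*} [Semiring R] [Fintype ι] [DecidableEq ι]

theorem Matrix.eq_pow_mulVec_add_sum_of_forward_recursion (A : Matrix ι ι R) {N : ℕ}
    {x u : ℕ → ι → R} (hx : ∀ k < N, x (k + 1) = A *ᵥ x k + u k) :
    ∀ k ≤ N, x k = A ^ k *ᵥ x 0 + ∑ i ∈ range k, A ^ (k - 1 - i) *ᵥ u i := by
  intro k hk
  induction k with
  | zero => simp
  | succ k ih =>
    have hshift : ∀ i ∈ range k, A ^ (k - i) *ᵥ u i = A *ᵥ (A ^ (k - 1 - i) *ᵥ u i) := by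
      intro i hi
      rw [mulVec_mulVec, ← pow_succ', show k - 1 - i + 1 = k - i by grind]
    rw [hx k hk, ih (by omega), sum_range_succ, Nat.add_sub_cancel, Nat.sub_self, pow_zero,
      one_mulVec, sum_congr rfl hshift, mulVec_add, mulVec_sum, mulVec_mulVec, ← pow_succ',
      add_assoc]

theorem Matrix.eq_sum_pow_mulVec_of_backward_recursion (M : Matrix ι ι R) {N : ℕ}
    (v : Fin N → ι → R) {y : ℕ → ι → R} (hN : y N = 0)
    (hy : ∀ k : Fin N, y k = M *ᵥ y (k + 1) + v k) :
    ∀ k ≤ N, y k = ∑ j : Fin N, if k ≤ j then M ^ (j - k : ℕ) *ᵥ v j else 0 := by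
  intro k hk
  induction hk using Nat.decreasingInduction with
  | self => exact hN.trans (sum_eq_zero fun j _ => if_neg (by omega)).symm
  | of_succ k hk ih =>
    have hsplit : ∀ j : Fin N, (if k ≤ j then M ^ (j - k : ℕ) *ᵥ v j else 0) =
        M *ᵥ (if k + 1 ≤ j then M ^ (j - (k + 1) : ℕ) *ᵥ v j else 0) +
          if j = ⟨k, hk⟩ then v j else 0 := by
      intro j
      rcases lt_trichotomy k j with hkj | hkj | hjk
      · rw [if_pos hkj.le, if_pos (Nat.succ_le_of_lt hkj), if_neg (by grind), mulVec_mulVec,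
          ← pow_succ', add_zero, show (j : ℕ) - (k + 1) + 1 = j - k by omega]
      · obtain rfl : j = ⟨k, hk⟩ := Fin.ext hkj.symm
        simp
      · rw [if_neg (by omega), if_neg (by omega), if_neg (by grind), mulVec_zero, add_zero]
    rw [hy ⟨k, hk⟩, ih, sum_congr rfl fun j _ => hsplit j, sum_add_distrib, mulVec_sum,
      sum_ite_eq']
    simp

end Recursions

theorem Matrix.mulVec_prod_eq_sum {R κ ι ι' : Type*} [NonUnitalNonAssocSemiring R] [Fintype ι]
    [Fintype ι'] (M : Matrix κ (ι × ι') R) (v : ι × ι' → R) :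
    M *ᵥ v = ∑ i, M.submatrix id (Prod.mk i) *ᵥ fun b => v (i, b) := by
  ext
  simp [mulVec, dotProduct, Fintype.sum_prod_type, Finset.sum_apply]

theorem Fin.sum_ite_le_eq_sum_range {M : Type*} [AddCommMonoid M] {N k : ℕ} (hk : k < N)
    (f : ℕ → M) : ∑ i : Fin N, (if (i : ℕ) ≤ k then f i else 0) = ∑ i ∈ range (k + 1), f i := by
  rw [Fin.sum_univ_eq_sum_range (fun i => if i ≤ k then f i else 0), ← sum_filter]
  congr 1
  ext i
  simp only [mem_filter, mem_range]
  omega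

section Blocks

variable {n l m N : ℕ} (A : Matrix (Fin n) (Fin n) ℝ) (B : Matrix (Fin n) (Fin l) ℝ)
  (C : Matrix (Fin m) (Fin n) ℝ) (Θ : Fin N × Fin m → ℝ)

theorem Omat_transpose_mulVec_s10 :
    (Omat N A C)ᵀ *ᵥ Θ = Aᵀ *ᵥ ∑ j : Fin N, Aᵀ ^ (j : ℕ) *ᵥ (Cᵀ *ᵥ fun r => Θ (j, r)) := by
  rw [mulVec_prod_eq_sum, mulVec_sum]
  refine sum_congr rfl fun j _ => ?_
  change (C * A ^ ((j : ℕ) + 1))ᵀ *ᵥ _ = _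
  rw [transpose_mul, transpose_pow, pow_succ', mulVec_mulVec, mulVec_mulVec, Matrix.mul_assoc]

theorem Fmat_transpose_submatrix (i j : Fin N) :
    (Fmat N A B C)ᵀ.submatrix (Prod.mk i) (Prod.mk j) =
      if (i : ℕ) ≤ j then (C * A ^ (j - i : ℕ) * B)ᵀ else 0 := by
  ext
  simp only [Fmat, submatrix_apply, transpose_apply]
  split_ifs <;> rfl

theorem Fmat_transpose_mulVec_block (i : Fin N) :
    (fun e => ((Fmat N A B C)ᵀ *ᵥ Θ) (i, e)) =
      Bᵀ *ᵥ ∑ j : Fin N,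
        if (i : ℕ) ≤ j then Aᵀ ^ (j - i : ℕ) *ᵥ (Cᵀ *ᵥ fun r => Θ (j, r)) else 0 := by
  change (Fmat N A B C)ᵀ.submatrix (Prod.mk i) id *ᵥ Θ = _
  rw [mulVec_prod_eq_sum, mulVec_sum]
  refine sum_congr rfl fun j _ => ?_
  rw [submatrix_submatrix, Function.id_comp, Function.comp_id, Fmat_transpose_submatrix]
  split_ifs
  · rw [transpose_mul, transpose_mul, transpose_pow, mulVec_mulVec, mulVec_mulVec,
      Matrix.mul_assoc]
  · rw [zero_mulVec, mulVec_zero]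

theorem Qinv_mulVec_block (Q : Matrix (Fin l) (Fin l) ℝ) (w : Fin N × Fin l → ℝ) (i : Fin N) :
    (fun e => (Qinv N Q *ᵥ w) (i, e)) = Q⁻¹ *ᵥ fun e => w (i, e) := by
  ext e
  simp [Qinv, mulVec, dotProduct, Fintype.sum_prod_type]

theorem Lmat_submatrix (k i : Fin N) :
    (Lmat N A B).submatrix (Prod.mk k) (Prod.mk i) =
      if (i : ℕ) ≤ k then A ^ (k - i : ℕ) * B else 0 := by
  ext
  simp only [Lmat, submatrix_apply]
  split_ifs <;> rfl

theorem Lmat_mulVec_block (u : Fin N × Fin l → ℝ) (k : Fin N) :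
    (fun c => (Lmat N A B *ᵥ u) (k, c)) =
      ∑ i : Fin N, if (i : ℕ) ≤ k then A ^ (k - i : ℕ) *ᵥ (B *ᵥ fun e => u (i, e)) else 0 := by
  change (Lmat N A B).submatrix (Prod.mk k) id *ᵥ u = _
  rw [mulVec_prod_eq_sum]
  refine sum_congr rfl fun i _ => ?_
  rw [submatrix_submatrix, Function.id_comp, Function.comp_id, Lmat_submatrix]
  split_ifs
  · rw [mulVec_mulVec]
  · rw [zero_mulVec]

end Blocks

theorem stacked_state_linear_in_theta_general
    (n l m N : ℕ)
    (A : Matrix (Fin n) (Fin n) ℝ) (B : Matrix (Fin n) (Fin l) ℝ)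
    (C : Matrix (Fin m) (Fin n) ℝ)
    (P : Matrix (Fin n) (Fin n) ℝ) (Q : Matrix (Fin l) (Fin l) ℝ)
    (Θ : Fin N × Fin m → ℝ)
    (lam : ℕ → Fin n → ℝ)
    (hlamN : lam N = 0)
    (hlam : ∀ k : Fin N,
      lam (k : ℕ) = Aᵀ *ᵥ lam ((k : ℕ) + 1) + Cᵀ *ᵥ (fun r => Θ (k, r)))
    (xhat : ℕ → Fin n → ℝ)
    (hxhat0 : xhat 0 = P⁻¹ *ᵥ (Aᵀ *ᵥ lam 0))
    (hxhat : ∀ k < N, xhat (k + 1) = A *ᵥ xhat k + B *ᵥ (Q⁻¹ *ᵥ (Bᵀ *ᵥ lam k))) :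
    (fun p : Fin N × Fin n => xhat ((p.1 : ℕ) + 1) p.2)
      = (Smat N A * P⁻¹ * (Omat N A C)ᵀ + Lmat N A B * Qinv N Q * (Fmat N A B C)ᵀ) *ᵥ Θ := by
  have hlam_closed := eq_sum_pow_mulVec_of_backward_recursion Aᵀ _ hlamN hlam
  have hxhat_closed := eq_pow_mulVec_add_sum_of_forward_recursion A hxhat
  have hOΘ : (Omat N A C)ᵀ *ᵥ Θ = Aᵀ *ᵥ lam 0 := by
    simpa only [hlam_closed 0 (Nat.zero_le N), zero_le, if_true, Nat.sub_zero] using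
      Omat_transpose_mulVec_s10 A C Θ
  have hFΘ (i : Fin N) : (fun e => ((Fmat N A B C)ᵀ *ᵥ Θ) (i, e)) = Bᵀ *ᵥ lam i := by
    rw [Fmat_transpose_mulVec_block, hlam_closed i i.is_lt.le]
  suffices ∀ k : Fin N, xhat (k + 1) = A ^ (k + 1 : ℕ) *ᵥ (P⁻¹ *ᵥ ((Omat N A C)ᵀ *ᵥ Θ)) +
      fun c => (Lmat N A B *ᵥ (Qinv N Q *ᵥ ((Fmat N A B C)ᵀ *ᵥ Θ))) (k, c) by
    ext p
    rw [this, add_mulVec, ← mulVec_mulVec, ← mulVec_mulVec, ← mulVec_mulVec, ← mulVec_mulVec]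
    rfl
  intro k
  rw [hxhat_closed (k + 1) k.is_lt, hOΘ, ← hxhat0, Lmat_mulVec_block,
    ← Fin.sum_ite_le_eq_sum_range k.is_lt]
  simp only [Qinv_mulVec_block, hFΘ, Nat.add_sub_cancel]

/-- **The stacked state estimate is linear in `Θ`:**
for the trajectory generated from the costate recursion (with `x̂_0 = P⁻¹Aᵀλ_0`),
`stack(x̂_1, …, x̂_N) = (S P⁻¹ Oᵀ + L Q_inv Fᵀ) Θ`. -/
theorem stacked_state_linear_in_theta
    (n l m N : ℕ) (hN : 1 ≤ N)
    (A : Matrix (Fin n) (Fin n) ℝ) (B : Matrix (Fin n) (Fin l) ℝ)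
    (C : Matrix (Fin m) (Fin n) ℝ)
    (P : Matrix (Fin n) (Fin n) ℝ) (Q : Matrix (Fin l) (Fin l) ℝ)
    (hP : IsUnit P.det) (hQ : IsUnit Q.det)
    (Θ : Fin N × Fin m → ℝ)
    (lam : ℕ → Fin n → ℝ)
    (hlamN : lam N = 0)
    (hlam : ∀ k : Fin N,
      lam (k : ℕ) = Aᵀ *ᵥ lam ((k : ℕ) + 1) + Cᵀ *ᵥ (fun r => Θ (k, r)))
    (xhat : ℕ → Fin n → ℝ)
    (hxhat0 : xhat 0 = P⁻¹ *ᵥ (Aᵀ *ᵥ lam 0))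
    (hxhat : ∀ k < N, xhat (k + 1) = A *ᵥ xhat k + B *ᵥ (Q⁻¹ *ᵥ (Bᵀ *ᵥ lam k))) :
    (fun p : Fin N × Fin n => xhat ((p.1 : ℕ) + 1) p.2)
      = (Smat N A * P⁻¹ * (Omat N A C)ᵀ + Lmat N A B * Qinv N Q * (Fmat N A B C)ᵀ) *ᵥ Θ :=
  stacked_state_linear_in_theta_general n l m N A B C P Q Θ lam hlamN hlam xhat hxhat0 hxhat
end
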